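/- arXiv:1804.11157 — 2 statements merged into one kernel-verified Lean document; each statement's English description precedes it below -/
import Mathlib

section
/- Let ν > 0 be a real number, Z ≥ 0, and N ∈ ℕ with N ≥ ν + 1. Then for every ζ ∈ [0, Z], ∑_{k=N+1}^∞ ζ^{2k−2} / (Γ(k−ν) · (k−1)! · 2^{2k−2}) ≤ exp(Z²/4) · (Z²/4)^N / N!, where Γ is the real Gamma function. -/
open scoped Nat

lemma real_exp_tsum (x : ℝ) : Real.exp x = ∑' n : ℕ, x ^ n / n ! := by
  rw [Real.exp_eq_exp_ℝ, NormedSpace.exp_eq_tsum_div]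

/-- Tail estimate used in the linearisation error bound for the Matérn covariance kernel:
for `ν > 0`, `N ≥ ν + 1` and `0 ≤ ζ ≤ Z`, writing `k = N + 1 + j` (so that the sum runs over
`k = N+1, N+2, …`),
`∑_{k=N+1}^∞ ζ^{2k-2} / (Γ(k-ν) (k-1)! 2^{2k-2}) ≤ exp (Z²/4) (Z²/4)^N / N!`. -/
theorem matern_series_tail_le (ν : ℝ) (hν : 0 < ν) (Z : ℝ) (hZ : 0 ≤ Z) (N : ℕ)
    (hN : ν + 1 ≤ (N : ℝ)) (ζ : ℝ) (hζ : ζ ∈ Set.Icc 0 Z) :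
    (∑' j : ℕ, ζ ^ (2 * (N + 1 + j) - 2) /
        (Real.Gamma (((N : ℝ) + 1 + j) - ν) * (((N + j)! : ℕ) : ℝ) *
          (2 : ℝ) ^ (2 * (N + 1 + j) - 2)))
      ≤ Real.exp (Z ^ 2 / 4) * (Z ^ 2 / 4) ^ N / (N ! : ℝ) := by
  obtain ⟨hζ0, hζZ⟩ := hζ
  set x : ℝ := Z ^ 2 / 4 with hx
  have hx0 : 0 ≤ x := by positivity
  -- per-term bound
  have hG1all : ∀ j : ℕ, (1 : ℝ) ≤ Real.Gamma (((N : ℝ) + 1 + j) - ν) := by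
    intro j
    have h2 : (2 : ℝ) ≤ ((N : ℝ) + 1 + j) - ν := by
      have : (0 : ℝ) ≤ (j : ℕ) := Nat.cast_nonneg j
      linarith
    calc (1 : ℝ) = Real.Gamma 2 := Real.Gamma_two.symm
      _ ≤ Real.Gamma (((N : ℝ) + 1 + j) - ν) := by
          rcases eq_or_lt_of_le h2 with h | h
          · rw [h]
          · exact le_of_lt (Real.Gamma_strictMonoOn_Ici (by simp) h2 h)
  have key : ∀ j : ℕ, ζ ^ (2 * (N + 1 + j) - 2) /
        (Real.Gamma (((N : ℝ) + 1 + j) - ν) * (((N + j)! : ℕ) : ℝ) *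
          (2 : ℝ) ^ (2 * (N + 1 + j) - 2))
      ≤ x ^ N / N ! * (x ^ j / j !) := by
    intro j
    have hexp : 2 * (N + 1 + j) - 2 = 2 * (N + j) := by omega
    have hG1 := hG1all j
    have hfac : ((N ! : ℕ) : ℝ) * ((j ! : ℕ) : ℝ) ≤ (((N + j)! : ℕ) : ℝ) := by
      have := Nat.factorial_mul_factorial_dvd_factorial_add N j
      exact_mod_cast Nat.le_of_dvd (Nat.factorial_pos _) this
    have hfacpos : (0 : ℝ) < (((N + j)! : ℕ) : ℝ) := by positivity
    have step1 : ζ ^ (2 * (N + 1 + j) - 2) /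
        (Real.Gamma (((N : ℝ) + 1 + j) - ν) * (((N + j)! : ℕ) : ℝ) *
          (2 : ℝ) ^ (2 * (N + 1 + j) - 2))
        ≤ (ζ ^ 2 / 4) ^ (N + j) / (((N + j)! : ℕ) : ℝ) := by
      rw [hexp, pow_mul, pow_mul]
      have : (2 : ℝ) ^ 2 = 4 := by norm_num
      rw [this]
      rw [div_pow]
      have hnum : (0 : ℝ) ≤ (ζ ^ 2) ^ (N + j) := by positivity
      rw [div_le_div_iff₀ (by positivity) (by positivity)]
      have h4 : (0 : ℝ) < (4 : ℝ) ^ (N + j) := by positivity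
      calc (ζ ^ 2) ^ (N + j) * (((N + j)! : ℕ) : ℝ)
          ≤ (ζ ^ 2) ^ (N + j) * (Real.Gamma (((N : ℝ) + 1 + j) - ν) * (((N + j)! : ℕ) : ℝ)) := by
            apply mul_le_mul_of_nonneg_left _ hnum
            nlinarith
        _ = (ζ ^ 2) ^ (N + j) / (4 : ℝ) ^ (N + j) *
            (Real.Gamma (((N : ℝ) + 1 + j) - ν) * (((N + j)! : ℕ) : ℝ) * 4 ^ (N + j)) := by
            field_simp
    refine step1.trans ?_
    have hζx : ζ ^ 2 / 4 ≤ x := by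
      rw [hx]
      have := mul_self_le_mul_self hζ0 hζZ
      nlinarith
    have hζx0 : (0 : ℝ) ≤ ζ ^ 2 / 4 := by positivity
    calc (ζ ^ 2 / 4) ^ (N + j) / (((N + j)! : ℕ) : ℝ)
        ≤ x ^ (N + j) / (((N + j)! : ℕ) : ℝ) := by
          gcongr
      _ ≤ x ^ N / N ! * (x ^ j / j !) := by
          rw [pow_add]
          rw [div_mul_div_comm]
          apply div_le_div₀ (by positivity) le_rfl (by positivity) hfac
  have hnn : ∀ j : ℕ, 0 ≤ ζ ^ (2 * (N + 1 + j) - 2) /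
        (Real.Gamma (((N : ℝ) + 1 + j) - ν) * (((N + j)! : ℕ) : ℝ) *
          (2 : ℝ) ^ (2 * (N + 1 + j) - 2)) := by
    intro j
    have hG := hG1all j
    positivity
  have hsum2 : Summable (fun j : ℕ => x ^ N / N ! * (x ^ j / j !)) :=
    (Real.summable_pow_div_factorial x).mul_left _
  have hsum1 : Summable (fun j : ℕ => ζ ^ (2 * (N + 1 + j) - 2) /
        (Real.Gamma (((N : ℝ) + 1 + j) - ν) * (((N + j)! : ℕ) : ℝ) *
          (2 : ℝ) ^ (2 * (N + 1 + j) - 2))) :=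
    Summable.of_nonneg_of_le hnn key hsum2
  calc (∑' j : ℕ, ζ ^ (2 * (N + 1 + j) - 2) /
        (Real.Gamma (((N : ℝ) + 1 + j) - ν) * (((N + j)! : ℕ) : ℝ) *
          (2 : ℝ) ^ (2 * (N + 1 + j) - 2)))
      ≤ ∑' j : ℕ, x ^ N / N ! * (x ^ j / j !) := Summable.tsum_le_tsum key hsum1 hsum2
    _ = x ^ N / N ! * Real.exp x := by
        rw [tsum_mul_left, real_exp_tsum]
    _ = Real.exp x * x ^ N / N ! := by ring
end

section
/- Let A be an n×n complex Hermitian matrix and let C be an n×n positive semidefinite Hermitian matrix. Let A₀ denote the positive part of A, i.e. A₀ is obtained from the spectral decomposition of A by setting all negative eigenvalues to zero (equivalently, A₀ = f(A) via the continuous functional calculus with f(x) = max(x,0)). Then the ℓ²-operator norm satisfies ‖A₀ − C‖ ≤ 2 ‖A − C‖. -/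
/-!
Since `c ≥ 0`, `a ≥ a - c ≥ -‖a - c‖`, so the spectrum of `a` lies in `[-‖a - c‖, ∞)` and hence
`‖a⁻‖ ≤ ‖a - c‖`. Then `a⁺ - c = (a - c) + a⁻` and the triangle inequality gives the factor `2`.
-/

open scoped Matrix.Norms.L2Operator ComplexOrder

section
variable {A : Type*} [CStarAlgebra A] [PartialOrder A] [StarOrderedRing A]

theorem CFC.norm_negPart_le_norm_sub_of_nonneg {a c : A} (ha : IsSelfAdjoint a) (hc : 0 ≤ c) :
    ‖a⁻‖ ≤ ‖a - c‖ := by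
  have hspec : ∀ x ∈ spectrum ℝ a, -‖a - c‖ ≤ x := by
    refine (algebraMap_le_iff_le_spectrum ha).mp ?_
    calc algebraMap ℝ A (-‖a - c‖) ≤ a - c := by
          simpa using (ha.sub (.of_nonneg hc)).neg_algebraMap_norm_le_self
      _ ≤ a := sub_le_self a hc
  rw [CStarAlgebra.norm_le_iff_le_algebraMap _ (norm_nonneg _) (CFC.negPart_nonneg a),
    CFC.negPart_def, cfcₙ_eq_cfc]
  exact cfc_le_algebraMap _ _ _ fun x hx => sup_le (by linarith [hspec x hx]) (norm_nonneg _)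

theorem CFC.norm_posPart_sub_le_two_mul {a c : A} (ha : IsSelfAdjoint a) (hc : 0 ≤ c) :
    ‖a⁺ - c‖ ≤ 2 * ‖a - c‖ := by
  have : a⁺ - c = (a - c) + a⁻ := by
    rw [eq_add_of_sub_eq (CFC.posPart_sub_negPart a ha)]; abel
  calc ‖a⁺ - c‖ ≤ ‖a - c‖ + ‖a⁻‖ := this ▸ norm_add_le _ _
    _ ≤ 2 * ‖a - c‖ := by linarith [norm_negPart_le_norm_sub_of_nonneg ha hc]
end

/-- Replacing a Hermitian matrix `A` by its positive part `A₀` (obtained from the spectral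
decomposition of `A` by setting all negative eigenvalues to zero, i.e. `A₀ = f(A)` with
`f x = max x 0` via the functional calculus) at most doubles the `ℓ²`-operator-norm distance
to any positive semidefinite matrix `C`: `‖A₀ - C‖ ≤ 2 ‖A - C‖`. -/
theorem positive_part_l2_opNorm_bound {n : ℕ} (A C : Matrix (Fin n) (Fin n) ℂ)
    (hA : A.IsHermitian) (hC : C.PosSemidef) :
    ‖hA.cfc (fun x => max x 0) - C‖ ≤ 2 * ‖A - C‖ := by
  open scoped MatrixOrder in
  have key := CFC.norm_posPart_sub_le_two_mul (hA : IsSelfAdjoint A) hC.nonneg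
  -- `fun x => max x 0` is `(·⁺)` on `ℝ` by definition.
  rwa [CFC.posPart_def, cfcₙ_eq_cfc, hA.cfc_eq] at key
end
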